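/- Let G be obtained from a graph H by subdividing one edge (replacing edge uv by a new vertex w adjacent to u and v, and deleting uv). Then f_∞(G) = f_∞(H). -/

import Mathlib

/-- `d` is a distance function on the graph `G`. -/
def IsDistFn {V : Type*} (G : SimpleGraph V) (d : V → V → ℝ) : Prop :=
  (∀ x y, d x y = d y x) ∧ (∀ x y, G.Adj x y → 0 ≤ d x y) ∧
  (∀ x y, G.Adj x y → ∀ p : G.Walk x y,
    d x y ≤ (p.darts.map fun e => d e.toProd.1 e.toProd.2).sum)

/-- `f_∞(G)`: the least `k` such that every distance function on `G` admits a
realization in `ℓ_∞^k`. -/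
noncomputable def finfty {V : Type*} [Fintype V] (G : SimpleGraph V) : ℕ :=
  sInf {k : ℕ | ∀ d : V → V → ℝ, IsDistFn G d →
    ∃ q : V → Fin k → ℝ, ∀ x y, G.Adj x y → ‖q x - q y‖ = d x y}

/-! Write `w` for the new vertex. A realization of `G` yields one of `H` by contracting `vw`:
give `vw` length `0` and `uw` the length of `uv`, so that `v` and `w` land on the same point.

Conversely, given lengths `d` on `G`, give `uv` the length `c` of a suitable `u`–`v` walk of `G`:
`d(uw) + d(vw)` if `uv` is a bridge of `H`, a lightest walk otherwise. This is a distance function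
on `H`, and a realization of it extends to `w` once there is a point at distances `d(uw)`, `d(vw)`
from the images of `u`, `v`. For a bridge the images are `d(uw) + d(vw)` apart and a point of the
segment works. Otherwise `uv` lies on a cycle, which rules out dimensions `0` and `1`, and in
`ℓ_∞^k` with `k ≥ 2` the triangle inequalities `|d(uw) - d(vw)| ≤ c ≤ d(uw) + d(vw)`
suffice. -/

lemma exists_dist_eq_of_dist_eq_add {E : Type*} [SeminormedAddCommGroup E] [NormedSpace ℝ E]
    {x z : E} {a b : ℝ} (ha : 0 ≤ a) (hb : 0 ≤ b) (h : dist x z = a + b) :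
    ∃ y, dist x y = a ∧ dist y z = b := by
  obtain ⟨y, hxy, hyz⟩ := exists_dist_le_le ha hb (h.trans_le (add_comm a b).le)
  have := dist_triangle x y z
  exact ⟨y, by linarith, by linarith⟩

section Pi

variable {ι : Type*} [Fintype ι] {π : ι → Type*} [∀ i, PseudoMetricSpace (π i)]

lemma exists_dist_apply_eq_dist [Nonempty ι] (f g : ∀ i, π i) :
    ∃ i, dist (f i) (g i) = dist f g := by
  obtain ⟨i, -, hi⟩ :=
    Finset.univ.exists_mem_eq_sup Finset.univ_nonempty fun i => nndist (f i) (g i)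
  exact ⟨i, by rw [dist_pi_def, hi, coe_nndist]⟩

lemma dist_pi_eq_of_le_of_eq {f g : ∀ i, π i} {r : ℝ} (i : ι)
    (hle : ∀ j, dist (f j) (g j) ≤ r) (heq : dist (f i) (g i) = r) : dist f g = r :=
  le_antisymm ((dist_pi_le_iff (heq ▸ dist_nonneg)).2 hle) (heq ▸ dist_le_pi_dist f g i)

end Pi

lemma abs_sub_ite_nonneg (z t : ℝ) : |z - if 0 ≤ z then t else -t| = |(|z| - t)| := by
  split_ifs with hz
  · rw [abs_of_nonneg hz]
  · rw [abs_of_neg (not_le.1 hz), ← abs_neg]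
    ring_nf

/-- For `b ≤ a`: a coordinate where `X` and `Y` differ most carries the distance `a` to `X`,
any other coordinate the distance `b` to `Y`. -/
lemma exists_dist_eq_of_abs_sub_le {ι : Type*} [Fintype ι] [Nontrivial ι] {X Y : ι → ℝ}
    {a b : ℝ} (h₁ : |a - b| ≤ dist X Y) (h₂ : dist X Y ≤ a + b) :
    ∃ W, dist X W = a ∧ dist W Y = b := by
  classical
  wlog hba : b ≤ a generalizing X Y a b
  · obtain ⟨W, hXW, hWY⟩ := this (X := Y) (Y := X) (a := b) (b := a)
      (by rwa [abs_sub_comm, dist_comm]) (by rwa [dist_comm, add_comm]) (le_of_not_ge hba)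
    exact ⟨W, by rwa [dist_comm], by rwa [dist_comm]⟩
  have hb : 0 ≤ b := by linarith [le_abs_self (a - b), neg_abs_le (a - b)]
  obtain ⟨i, hi⟩ := exists_dist_apply_eq_dist X Y
  obtain ⟨j, hj⟩ := exists_ne i
  have hle : ∀ l, |X l - Y l| ≤ dist X Y := fun l =>
    (Real.dist_eq _ _).symm.trans_le (dist_le_pi_dist X Y l)
  let s : ℝ → ℝ → ℝ := fun z t => if 0 ≤ z then t else -t
  have hs : ∀ z t, |s z t| = |t| := fun z t => by dsimp only [s]; split_ifs <;> simp
  let W := Function.update (fun l => Y l + s (X l - Y l) b) i (X i - s (X i - Y i) a)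
  refine ⟨W, dist_pi_eq_of_le_of_eq i (fun l => ?_) ?_,
    dist_pi_eq_of_le_of_eq j (fun l => ?_) ?_⟩
  · rcases eq_or_ne l i with rfl | hli
    · simp [W, hs, abs_of_nonneg (hb.trans hba)]
    · have := hle l
      simp only [W, Function.update_of_ne hli]
      rw [Real.dist_eq, sub_add_eq_sub_sub, abs_sub_ite_nonneg, abs_le]
      constructor <;> linarith [abs_nonneg (X l - Y l)]
  · simp [W, hs, abs_of_nonneg (hb.trans hba)]
  · rcases eq_or_ne l i with rfl | hli
    · simp only [W, Function.update_self]
      rw [Real.dist_eq, sub_right_comm, abs_sub_ite_nonneg, ← Real.dist_eq (X l), hi, abs_le]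
      constructor <;> linarith [le_abs_self (a - b)]
    · simp [W, Function.update_of_ne hli, hs, abs_of_nonneg hb]
  · simp [W, Function.update_of_ne hj, hs, abs_of_nonneg hb]

namespace SimpleGraph.Walk

variable {V : Type*} {G : SimpleGraph V}

def weight (d : V → V → ℝ) {x y : V} (p : G.Walk x y) : ℝ :=
  (p.darts.map fun e => d e.fst e.snd).sum

variable {d : V → V → ℝ} {x y z : V}

@[simp] lemma weight_nil : (nil : G.Walk x x).weight d = 0 := rfl

@[simp] lemma weight_cons (h : G.Adj x y) (p : G.Walk y z) :
    (cons h p).weight d = d x y + p.weight d := by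
  simp [weight]

@[simp] lemma weight_append (p : G.Walk x y) (q : G.Walk y z) :
    (p.append q).weight d = p.weight d + q.weight d := by
  simp [weight, darts_append]

@[simp] lemma weight_copy {x' y' : V} (p : G.Walk x y) (hx : x = x') (hy : y = y') :
    (p.copy hx hy).weight d = p.weight d := by
  subst hx hy; rfl

lemma weight_reverse (hd : ∀ a b, d a b = d b a) (p : G.Walk x y) :
    p.reverse.weight d = p.weight d := by
  simp [weight, darts_reverse, List.sum_reverse, Function.comp_def, hd]

lemma weight_nonneg (hd : ∀ a b, G.Adj a b → 0 ≤ d a b) (p : G.Walk x y) :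
    0 ≤ p.weight d :=
  List.sum_nonneg <| by simpa using fun e _ => hd _ _ e.adj

lemma le_weight_of_mem_darts (hd : ∀ a b, G.Adj a b → 0 ≤ d a b) {p : G.Walk x y}
    {e : G.Dart} (he : e ∈ p.darts) : d e.fst e.snd ≤ p.weight d :=
  List.single_le_sum (by simpa using fun e _ => hd _ _ e.adj) _ (List.mem_map_of_mem he)

lemma weight_bypass_le [DecidableEq V] (hd : ∀ a b, G.Adj a b → 0 ≤ d a b)
    (p : G.Walk x y) : p.bypass.weight d ≤ p.weight d :=
  (p.darts_bypass_sublist_darts.map _).sum_le_sum <| by simpa using fun e _ => hd _ _ e.adj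

/-- A lightest path is a lightest walk, as bypassing never adds weight. -/
lemma exists_weight_min [Finite V] (hd : ∀ a b, G.Adj a b → 0 ≤ d a b) (p₀ : G.Walk x y) :
    ∃ R : G.Walk x y, ∀ p : G.Walk x y, R.weight d ≤ p.weight d := by
  classical
  have := Fintype.ofFinite V
  obtain ⟨R, -, hR⟩ := Finset.univ.exists_min_image
    (fun P : G.Path x y => (P : G.Walk x y).weight d)
    ⟨⟨p₀.bypass, p₀.bypass_isPath⟩, by simp⟩
  exact ⟨R, fun p =>
    (hR ⟨p.bypass, p.bypass_isPath⟩ (by simp)).trans (weight_bypass_le hd p)⟩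

lemma sub_mem_of_forall_mem_darts {A : Type*} [AddCommGroup A] (S : AddSubgroup A) (f : V → A)
    (p : G.Walk x y) (h : ∀ e ∈ p.darts, f e.fst - f e.snd ∈ S) : f x - f y ∈ S := by
  induction p with
  | nil => simp
  | cons hadj p ih =>
    simp only [darts_cons, List.mem_cons, forall_eq_or_imp] at h
    simpa using S.add_mem h.1 (ih h.2)

end SimpleGraph.Walk

namespace IsDistFn

variable {V : Type*} {G : SimpleGraph V} {d : V → V → ℝ}

lemma symm (hd : IsDistFn G d) (x y : V) : d x y = d y x := hd.1 x y

lemma nonneg (hd : IsDistFn G d) {x y : V} (h : G.Adj x y) : 0 ≤ d x y := hd.2.1 x y h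

lemma le_weight (hd : IsDistFn G d) {x y : V} (h : G.Adj x y) (p : G.Walk x y) :
    d x y ≤ p.weight d :=
  hd.2.2 x y h p

lemma of_le_two_mul {m : ℝ} (hs : ∀ x y, d x y = d y x)
    (hm : ∀ x y, G.Adj x y → m ≤ d x y ∧ d x y ≤ 2 * m) : IsDistFn G d := by
  have hnonneg : ∀ x y, G.Adj x y → 0 ≤ d x y := fun x y h => by linarith [hm x y h]
  refine ⟨hs, hnonneg, fun x y hxy p => ?_⟩
  change _ ≤ p.weight d
  cases p with
  | nil => exact absurd hxy G.irrefl
  | cons h p =>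
    cases p with
    | nil => simp
    | cons h' p =>
      simp only [SimpleGraph.Walk.weight_cons]
      linarith [hm _ _ h, hm _ _ h', hm x y hxy, p.weight_nonneg hnonneg]

end IsDistFn

section Contraction

variable {V W : Type*} {G : SimpleGraph V} {H : SimpleGraph W}

def distComap [DecidableEq W] (φ : V → W) (d : W → W → ℝ) : V → V → ℝ :=
  fun a b => if φ a = φ b then 0 else d (φ a) (φ b)

variable [DecidableEq W] {φ : V → W} {d : W → W → ℝ}

lemma SimpleGraph.Walk.exists_weight_eq_weight_distComap
    (hφ : ∀ a b, G.Adj a b → φ a = φ b ∨ H.Adj (φ a) (φ b)) {a b : V} (p : G.Walk a b) :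
    ∃ q : H.Walk (φ a) (φ b), q.weight d = p.weight (distComap φ d) := by
  induction p with
  | nil => exact ⟨.nil, rfl⟩
  | @cons a b c hab p ih =>
    obtain ⟨q, hq⟩ := ih
    rcases hφ a b hab with heq | hadj
    · exact ⟨q.copy heq.symm rfl, by simp [distComap, heq, hq]⟩
    · exact ⟨.cons hadj q, by simp [distComap, hadj.ne, hq]⟩

lemma IsDistFn.comap (hd : IsDistFn H d)
    (hφ : ∀ a b, G.Adj a b → φ a = φ b ∨ H.Adj (φ a) (φ b)) :
    IsDistFn G (distComap φ d) := by
  have hnonneg : ∀ a b, G.Adj a b → 0 ≤ distComap φ d a b := fun a b hab => by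
    rcases hφ a b hab with heq | hadj
    · simp [distComap, heq]
    · simpa [distComap, hadj.ne] using hd.nonneg hadj
  refine ⟨fun a b => ?_, hnonneg, fun a b hab p => ?_⟩
  · simp only [distComap, eq_comm, hd.symm]
  · obtain ⟨q, hq⟩ := p.exists_weight_eq_weight_distComap (d := d) hφ
    change _ ≤ p.weight _
    rcases hφ a b hab with heq | hadj
    · simpa [distComap, heq] using p.weight_nonneg hnonneg
    · simpa [distComap, hadj.ne, ← hq] using hd.le_weight hadj q

end Contraction

def Realizable {V : Type*} (G : SimpleGraph V) (k : ℕ) : Prop :=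
  ∀ d : V → V → ℝ, IsDistFn G d →
    ∃ q : V → Fin k → ℝ, ∀ x y, G.Adj x y → ‖q x - q y‖ = d x y

/-- Give the edge length `1/2` and all others length `1`. On the line, the ends of the edge would
be both `1/2` apart and, following the rest of a cycle, an integer apart. -/
lemma Realizable.two_le_of_not_isBridge {V : Type*} {H : SimpleGraph V} {k : ℕ} {u v : V}
    (hH : Realizable H k) (huv : H.Adj u v) (hbr : ¬ H.IsBridge s(u, v)) : 2 ≤ k := by
  classical
  let d : V → V → ℝ := fun x y => if s(x, y) = s(u, v) then 1 / 2 else 1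
  have hd : IsDistFn H d := IsDistFn.of_le_two_mul (m := 1 / 2)
    (fun x y => by simp only [d, Sym2.eq_swap])
    (fun x y _ => by dsimp only [d]; split_ifs <;> norm_num)
  obtain ⟨q, hq⟩ := hH d hd
  have hquv : ‖q u - q v‖ = 1 / 2 := by simpa [d] using hq u v huv
  by_contra! hk
  interval_cases k
  · rw [Subsingleton.elim (q u - q v) 0, norm_zero] at hquv
    norm_num at hquv
  · obtain ⟨p, hp⟩ : ∃ p : H.Walk u v, s(u, v) ∉ p.edges := by
      simpa [SimpleGraph.isBridge_iff_forall_walk_mem_edges] using hbr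
    have hint : q u 0 - q v 0 ∈ AddSubgroup.zmultiples (1 : ℝ) := by
      refine p.sub_mem_of_forall_mem_darts _ (fun x => q x 0) fun e he => ?_
      have hne : s(e.fst, e.snd) ≠ s(u, v) := fun h => hp (h ▸ List.mem_map_of_mem he)
      have h1 := hq _ _ e.adj
      rw [show d e.fst e.snd = 1 from if_neg hne] at h1
      replace h1 : |q e.fst 0 - q e.snd 0| = 1 := by simpa [Pi.norm_def] using h1
      rcases (abs_eq zero_le_one).1 h1 with h | h <;> rw [h]
      exacts [AddSubgroup.mem_zmultiples 1, neg_mem (AddSubgroup.mem_zmultiples 1)]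
    obtain ⟨n, hn⟩ := AddSubgroup.mem_zmultiples_iff.1 hint
    have h2 : |q u 0 - q v 0| = 1 / 2 := by simpa [Pi.norm_def] using hquv
    rw [← hn, zsmul_one, ← Int.cast_abs] at h2
    have : 2 * |n| = 1 := by exact_mod_cast (by linarith : (2 * |n| : ℝ) = 1)
    omega

namespace SimpleGraph

variable {V : Type*} {H : SimpleGraph V} {u v : V} {G : SimpleGraph (Option V)}
  {d : Option V → Option V → ℝ}

/-- `G` is `H` with the edge `uv` subdivided by the new vertex `none`. -/
structure IsEdgeSubdivision (G : SimpleGraph (Option V)) (H : SimpleGraph V) (u v : V) :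
    Prop where
  adj_some_some : ∀ x y, G.Adj (some x) (some y) ↔ H.Adj x y ∧ s(x, y) ≠ s(u, v)
  adj_some_none : ∀ x, G.Adj (some x) none ↔ x = u ∨ x = v

lemma IsEdgeSubdivision.adj_getD (hG : G.IsEdgeSubdivision H u v) (huv : H.Adj u v)
    (α β : Option V) (h : G.Adj α β) :
    α.getD v = β.getD v ∨ H.Adj (α.getD v) (β.getD v) := by
  rcases α with _ | x <;> rcases β with _ | y
  · exact absurd h G.irrefl
  · rcases (hG.adj_some_none y).1 h.symm with rfl | rfl
    exacts [Or.inr huv.symm, Or.inl rfl]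
  · rcases (hG.adj_some_none x).1 h with rfl | rfl
    exacts [Or.inr huv, Or.inl rfl]
  · exact Or.inr ((hG.adj_some_some x y).1 h).1

lemma IsEdgeSubdivision.abs_sub_le_weight (hG : G.IsEdgeSubdivision H u v) (hd : IsDistFn G d)
    (R : G.Walk (some u) (some v)) : |d (some u) none - d (some v) none| ≤ R.weight d := by
  have huw : G.Adj (some u) none := (hG.adj_some_none u).2 (Or.inl rfl)
  have hvw : G.Adj (some v) none := (hG.adj_some_none v).2 (Or.inr rfl)
  have h₁ := hd.le_weight huw (R.append (.cons hvw .nil))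
  have h₂ := hd.le_weight hvw (R.reverse.append (.cons huw .nil))
  simp only [Walk.weight_append, Walk.weight_reverse hd.symm, Walk.weight_cons,
    Walk.weight_nil] at h₁ h₂
  exact abs_sub_le_iff.2 ⟨by linarith, by linarith⟩

def inducedDist [DecidableEq V] (d : Option V → Option V → ℝ) (u v : V) (c : ℝ) :
    V → V → ℝ :=
  fun x y => if s(x, y) = s(u, v) then c else d (some x) (some y)

variable [DecidableEq V]

lemma inducedDist_comm (hd : ∀ α β, d α β = d β α) (c : ℝ) (x y : V) :
    inducedDist d u v c x y = inducedDist d u v c y x := by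
  simp only [inducedDist, Sym2.eq_swap, hd]

lemma IsEdgeSubdivision.exists_walk_weight_eq (hG : G.IsEdgeSubdivision H u v)
    (hd : ∀ α β, d α β = d β α) (R : G.Walk (some u) (some v)) {x y : V} (p : H.Walk x y) :
    ∃ P : G.Walk (some x) (some y), P.weight d = p.weight (inducedDist d u v (R.weight d)) := by
  induction p with
  | nil => exact ⟨.nil, rfl⟩
  | @cons x z y hxz p ih =>
    obtain ⟨P, hP⟩ := ih
    by_cases he : s(x, z) = s(u, v)
    · rcases Sym2.eq_iff.1 he with ⟨rfl, rfl⟩ | ⟨rfl, rfl⟩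
      · exact ⟨R.append P, by simp [inducedDist, hP]⟩
      · exact ⟨R.reverse.append P,
          by simp [inducedDist, Walk.weight_reverse hd, hP, Sym2.eq_swap]⟩
    · exact ⟨.cons ((hG.adj_some_some x z).2 ⟨hxz, he⟩) P, by simp [inducedDist, he, hP]⟩

lemma IsEdgeSubdivision.inducedDist_nonneg (hG : G.IsEdgeSubdivision H u v)
    (hd : IsDistFn G d) {c : ℝ} (hc : 0 ≤ c) (x y : V) (hxy : H.Adj x y) :
    0 ≤ inducedDist d u v c x y := by
  unfold inducedDist
  split_ifs with he
  exacts [hc, hd.nonneg ((hG.adj_some_some x y).2 ⟨hxy, he⟩)]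

lemma IsEdgeSubdivision.isDistFn_inducedDist (hG : G.IsEdgeSubdivision H u v)
    (hd : IsDistFn G d) (R : G.Walk (some u) (some v))
    (hR : ∀ p : H.Walk u v, R.weight d ≤ p.weight (inducedDist d u v (R.weight d))) :
    IsDistFn H (inducedDist d u v (R.weight d)) := by
  refine ⟨inducedDist_comm hd.symm _,
    hG.inducedDist_nonneg hd (R.weight_nonneg fun _ _ => hd.nonneg), fun x y hxy p => ?_⟩
  change _ ≤ p.weight _
  by_cases he : s(x, y) = s(u, v)
  · rw [inducedDist, if_pos he]
    rcases Sym2.eq_iff.1 he with ⟨rfl, rfl⟩ | ⟨rfl, rfl⟩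
    · exact hR p
    · simpa [Walk.weight_reverse (inducedDist_comm hd.symm _)] using hR p.reverse
  · obtain ⟨P, hP⟩ := hG.exists_walk_weight_eq hd.symm R p
    rw [inducedDist, if_neg he, ← hP]
    exact hd.le_weight ((hG.adj_some_some x y).2 ⟨hxy, he⟩) P

/-- If `uv` is a bridge, `R` runs through the new vertex; otherwise `R` is a lightest walk. -/
lemma IsEdgeSubdivision.exists_walk_replacing_edge [Finite V] {k : ℕ}
    (hG : G.IsEdgeSubdivision H u v) (huv : H.Adj u v) (hd : IsDistFn G d) (hH : Realizable H k) :
    ∃ R : G.Walk (some u) (some v),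
      R.weight d ≤ d (some u) none + d (some v) none ∧
      (∀ p : H.Walk u v, R.weight d ≤ p.weight (inducedDist d u v (R.weight d))) ∧
      (R.weight d = d (some u) none + d (some v) none ∨ 2 ≤ k) := by
  have huw : G.Adj (some u) none := (hG.adj_some_none u).2 (Or.inl rfl)
  have hvw : G.Adj none (some v) := ((hG.adj_some_none v).2 (Or.inr rfl)).symm
  let R₀ : G.Walk (some u) (some v) := .cons huw (.cons hvw .nil)
  have hR₀ : R₀.weight d = d (some u) none + d (some v) none := by simp [R₀, hd.symm none]
  by_cases hbr : H.IsBridge s(u, v)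
  · refine ⟨R₀, hR₀.le, fun p => ?_, Or.inl hR₀⟩
    obtain ⟨e, he, hee⟩ := List.mem_map.1 (isBridge_iff_forall_walk_mem_edges.1 hbr p)
    have hnonneg := hG.inducedDist_nonneg hd (R₀.weight_nonneg fun _ _ => hd.nonneg)
    simpa [inducedDist, show s(e.fst, e.snd) = s(u, v) from hee] using
      p.le_weight_of_mem_darts hnonneg he
  · obtain ⟨R, hR⟩ := R₀.exists_weight_min fun _ _ => hd.nonneg
    refine ⟨R, (hR R₀).trans_eq hR₀, fun p => ?_,
      Or.inr (hH.two_le_of_not_isBridge huv hbr)⟩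
    obtain ⟨P, hP⟩ := hG.exists_walk_weight_eq hd.symm R p
    exact hP ▸ hR P

lemma IsEdgeSubdivision.realizes_elim {E : Type*} [SeminormedAddCommGroup E]
    (hG : G.IsEdgeSubdivision H u v) (hd : ∀ α β, d α β = d β α) {c : ℝ} {q : V → E}
    (hq : ∀ x y, H.Adj x y → ‖q x - q y‖ = inducedDist d u v c x y) {w : E}
    (hu : ‖q u - w‖ = d (some u) none) (hv : ‖q v - w‖ = d (some v) none) :
    ∀ α β, G.Adj α β → ‖α.elim w q - β.elim w q‖ = d α β := by
  rintro (_ | x) (_ | y) h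
  · exact absurd h G.irrefl
  · rw [norm_sub_rev, hd]
    rcases (hG.adj_some_none y).1 h.symm with rfl | rfl
    exacts [hu, hv]
  · rcases (hG.adj_some_none x).1 h with rfl | rfl
    exacts [hu, hv]
  · obtain ⟨hxy, he⟩ := (hG.adj_some_some x y).1 h
    simpa [inducedDist, he] using hq x y hxy

end SimpleGraph

namespace Realizable

open SimpleGraph (inducedDist)

variable {V : Type*} {H : SimpleGraph V} {u v : V} {G : SimpleGraph (Option V)} {k : ℕ}

lemma of_isEdgeSubdivision (hG : G.IsEdgeSubdivision H u v) (huv : H.Adj u v)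
    (h : Realizable G k) : Realizable H k := by
  classical
  intro d hd
  obtain ⟨q, hq⟩ := h _ (hd.comap (hG.adj_getD huv))
  have hv : q (some v) = q none := by
    simpa [distComap, sub_eq_zero] using hq _ _ ((hG.adj_some_none v).2 (Or.inr rfl))
  have hu : ‖q (some u) - q none‖ = d u v := by
    simpa [distComap, huv.ne] using hq _ _ ((hG.adj_some_none u).2 (Or.inl rfl))
  refine ⟨q ∘ some, fun x y hxy => ?_⟩
  by_cases he : s(x, y) = s(u, v)
  · rcases Sym2.eq_iff.1 he with ⟨rfl, rfl⟩ | ⟨rfl, rfl⟩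
    · simpa [hv] using hu
    · simpa [hv, norm_sub_rev, hd.symm] using hu
  · simpa [distComap, hxy.ne] using hq _ _ ((hG.adj_some_some x y).2 ⟨hxy, he⟩)

lemma isEdgeSubdivision [Finite V] (hH : Realizable H k) (hG : G.IsEdgeSubdivision H u v)
    (huv : H.Adj u v) : Realizable G k := by
  classical
  intro d hd
  obtain ⟨R, hRle, hR, hcase⟩ := hG.exists_walk_replacing_edge huv hd hH
  obtain ⟨q, hq⟩ := hH _ (hG.isDistFn_inducedDist hd R hR)
  have hquv : dist (q u) (q v) = R.weight d := by
    rw [dist_eq_norm, hq u v huv, inducedDist, if_pos rfl]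
  obtain ⟨w, hwu, hwv⟩ :
      ∃ w, dist (q u) w = d (some u) none ∧ dist w (q v) = d (some v) none := by
    rcases hcase with hc | hk
    · exact exists_dist_eq_of_dist_eq_add (hd.nonneg ((hG.adj_some_none u).2 (Or.inl rfl)))
        (hd.nonneg ((hG.adj_some_none v).2 (Or.inr rfl))) (hquv.trans hc)
    · have := Fin.nontrivial_iff_two_le.2 hk
      exact exists_dist_eq_of_abs_sub_le (hquv ▸ hG.abs_sub_le_weight hd R) (hquv ▸ hRle)
  exact ⟨fun α => α.elim w q, hG.realizes_elim hd.symm hq (by rwa [← dist_eq_norm])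
    (by rwa [← dist_eq_norm, dist_comm])⟩

end Realizable

/-- Subdividing an edge `uv` of `H` (replacing it by a new vertex `w` adjacent
to exactly `u` and `v`) does not change `f_∞`. -/
theorem finfty_subdivide
    {V : Type*} [Fintype V] (H : SimpleGraph V) (u v : V) (huv : H.Adj u v)
    (G : SimpleGraph (Option V))
    (hGs : ∀ x y : V, G.Adj (some x) (some y) ↔
      (H.Adj x y ∧ ¬(x = u ∧ y = v) ∧ ¬(x = v ∧ y = u)))
    (hGw : ∀ x : V, G.Adj (some x) none ↔ (x = u ∨ x = v)) :
    finfty G = finfty H := by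
  have hG : G.IsEdgeSubdivision H u v :=
    ⟨fun x y => by rw [hGs, Ne, Sym2.eq_iff]; tauto, hGw⟩
  have hrealizable : {k | Realizable G k} = {k | Realizable H k} :=
    Set.ext fun k => ⟨(·.of_isEdgeSubdivision hG huv), (·.isEdgeSubdivision hG huv)⟩
  exact congrArg sInf hrealizable
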